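/- For n, m ≥ 2 with n ≠ m, ∫_{-1}^1 P_n(x) P_m(x) (1 - x)/(1 + x) dx = 0; the polar Legendre polynomials are orthogonal on [-1,1] with respect to the weight (1-x)/(1+x). -/

import Mathlib

/-!
Put `W(x) = (1 - x) P_m(x) = (m + 1) ∫_x^1 L_m`, so that `W' = -(m + 1) L_m` and `W(±1) = 0`.
For `n < m`, `∫_{-1}^1 L_n = 0` forces `P_n(-1) = 0`, so `P_n = (x + 1) R` with `deg R = n - 1`
and the integral becomes `∫ R W`. Integrating by parts against an antiderivative `S` of `R` turns
it into `(m + 1) ∫ S L_m`, which vanishes because `deg S ≤ n < m` and, by Rodrigues' formula and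
`m` integrations by parts, `L_m` is orthogonal to all polynomials of lower degree.
-/

open intervalIntegral Finset Polynomial

/-- The `n`-th Legendre polynomial (as a function), via the Rodrigues formula,
normalized so that `legendreP n 1 = 1`. -/
noncomputable def legendreP (n : ℕ) : ℝ → ℝ :=
  fun x => (1 / (2 ^ n * (n.factorial : ℝ))) * iteratedDeriv n (fun y => (y ^ 2 - 1) ^ n) x

/-- `Qpoly n x = -∫_x^1 L_{n-1}(t) dt`. -/
noncomputable def Qpoly (n : ℕ) : ℝ → ℝ :=
  fun x => -∫ t in x..(1 : ℝ), legendreP (n - 1) t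

open MeasureTheory

namespace Polynomial

theorem iteratedDeriv_eval {𝕜 : Type*} [NontriviallyNormedField 𝕜] (p : 𝕜[X]) (n : ℕ) :
    iteratedDeriv n (fun x => p.eval x) = fun x => (derivative^[n] p).eval x := by
  induction n with
  | zero => simp
  | succ n ih =>
    ext x
    rw [iteratedDeriv_succ, ih, Function.iterate_succ_apply']
    exact ((derivative^[n] p).hasDerivAt x).deriv

theorem exists_derivative_eq_and_natDegree_le {K : Type*} [Field K] [CharZero K] (p : K[X]) :
    ∃ q : K[X], derivative q = p ∧ q.natDegree ≤ p.natDegree + 1 := by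
  refine ⟨p.sum fun k a => C (a / (k + 1)) * X ^ (k + 1), ?_, ?_⟩
  · conv_rhs => rw [← p.sum_C_mul_X_pow_eq]
    rw [Polynomial.sum, Polynomial.sum, map_sum]
    refine Finset.sum_congr rfl fun k _ => ?_
    rw [derivative_C_mul, derivative_X_pow, ← mul_assoc, ← C_mul]
    push_cast
    rw [div_mul_cancel₀ _ (Nat.cast_add_one_ne_zero k)]
  · refine natDegree_sum_le_of_forall_le _ _ fun k hk => (natDegree_C_mul_le _ _).trans ?_
    simpa using le_natDegree_of_mem_supp k hk

theorem eval_iterate_derivative_X_sq_sub_one_pow {R : Type*} [CommRing R] {n k : ℕ} (hk : k < n)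
    {x : R} (hx : x ^ 2 = 1) : (derivative^[k] ((X ^ 2 - 1 : R[X]) ^ n)).eval x = 0 := by
  obtain ⟨q, hq⟩ := pow_sub_dvd_iterate_derivative_pow (X ^ 2 - 1 : R[X]) n k
  rw [hq, eval_mul, eval_pow, eval_sub, eval_pow, eval_X, hx, eval_one, sub_self,
    zero_pow (by omega), zero_mul]

theorem integral_eval_mul_derivative (p q : ℝ[X]) (a b : ℝ) :
    ∫ x in a..b, p.eval x * (derivative q).eval x =
      p.eval b * q.eval b - p.eval a * q.eval a - ∫ x in a..b, (derivative p).eval x * q.eval x :=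
  integral_mul_deriv_eq_deriv_mul (fun x _ => p.hasDerivAt x) (fun x _ => q.hasDerivAt x)
    (p.derivative.continuous.intervalIntegrable _ _)
    (q.derivative.continuous.intervalIntegrable _ _)

theorem integral_eval_mul_iterate_derivative {a b : ℝ} {p : ℝ[X]} {k : ℕ}
    (hpa : ∀ j < k, (derivative^[j] p).eval a = 0)
    (hpb : ∀ j < k, (derivative^[j] p).eval b = 0)
    (q : ℝ[X]) :
    ∫ x in a..b, q.eval x * (derivative^[k] p).eval x =
      (-1) ^ k * ∫ x in a..b, (derivative^[k] q).eval x * p.eval x := by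
  induction k generalizing q with
  | zero => simp
  | succ k ih =>
    rw [Function.iterate_succ_apply', integral_eval_mul_derivative, hpa k k.lt_succ_self,
      hpb k k.lt_succ_self, ih (fun j hj => hpa j (by omega)) (fun j hj => hpb j (by omega)),
      Function.iterate_succ_apply]
    ring

end Polynomial

theorem legendreP_eq_eval (n : ℕ) (x : ℝ) :
    legendreP n x =
      1 / (2 ^ n * n.factorial) * (derivative^[n] ((X ^ 2 - 1 : ℝ[X]) ^ n)).eval x := by
  have hpoly : (fun y : ℝ => (y ^ 2 - 1) ^ n) = fun y => ((X ^ 2 - 1 : ℝ[X]) ^ n).eval y := by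
    simp
  rw [legendreP, hpoly, iteratedDeriv_eval]

theorem continuous_legendreP (n : ℕ) : Continuous (legendreP n) := by
  simp_rw [funext (legendreP_eq_eval n)]
  fun_prop

theorem integral_eval_mul_legendreP_eq_zero {n : ℕ} {q : ℝ[X]} (hq : q.natDegree < n) :
    ∫ x in (-1 : ℝ)..1, q.eval x * legendreP n x = 0 := by
  simp_rw [legendreP_eq_eval, mul_left_comm _ (1 / _ : ℝ), intervalIntegral.integral_const_mul,
    integral_eval_mul_iterate_derivative
      (fun j hj => eval_iterate_derivative_X_sq_sub_one_pow (x := (-1 : ℝ)) hj (by norm_num))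
      (fun j hj => eval_iterate_derivative_X_sq_sub_one_pow (x := (1 : ℝ)) hj (by norm_num)),
    iterate_derivative_eq_zero hq]
  simp

theorem integral_legendreP_eq_zero {n : ℕ} (hn : n ≠ 0) :
    ∫ x in (-1 : ℝ)..1, legendreP n x = 0 := by
  simpa using integral_eval_mul_legendreP_eq_zero (n := n) (q := 1) (by simpa [Nat.pos_iff_ne_zero])

theorem hasDerivAt_integral_legendreP (n : ℕ) (x : ℝ) :
    HasDerivAt (fun y => ∫ t in y..(1 : ℝ), legendreP n t) (-legendreP n x) x :=
  integral_hasDerivAt_left ((continuous_legendreP n).intervalIntegrable _ _)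
    ((continuous_legendreP n).stronglyMeasurableAtFilter _ _) (continuous_legendreP n).continuousAt

/-- `P` is the polar Legendre polynomial `P_n`, i.e. `(n + 1) Q_{n+1} = (x - 1) P`. -/
def IsPolarLegendre (n : ℕ) (P : ℝ[X]) : Prop :=
  ∀ x : ℝ, -((n : ℝ) + 1) * ∫ t in x..(1 : ℝ), legendreP n t = (x - 1) * P.eval x

namespace IsPolarLegendre

variable {n : ℕ} {P : ℝ[X]}

theorem eval_neg_one (hP : IsPolarLegendre n P) (hn : n ≠ 0) : P.eval (-1) = 0 := by
  have h := hP (-1)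
  rw [integral_legendreP_eq_zero hn, mul_zero] at h
  linarith

theorem hasDerivAt_one_sub_mul_eval (hP : IsPolarLegendre n P) (x : ℝ) :
    HasDerivAt (fun y => (1 - y) * P.eval y) (-((n : ℝ) + 1) * legendreP n x) x := by
  have hfun : (fun y => (1 - y) * P.eval y) =
      fun y => ((n : ℝ) + 1) * ∫ t in y..(1 : ℝ), legendreP n t := by
    ext y
    linarith [hP y]
  rw [hfun, neg_mul, ← mul_neg]
  exact (hasDerivAt_integral_legendreP n x).const_mul _

theorem integral_eval_mul_one_sub_mul_eval_eq_zero (hP : IsPolarLegendre n P) {R : ℝ[X]}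
    (hR : R.natDegree + 1 < n) :
    ∫ x in (-1 : ℝ)..1, R.eval x * ((1 - x) * P.eval x) = 0 := by
  obtain ⟨S, rfl, hS⟩ := exists_derivative_eq_and_natDegree_le R
  have hibp := integral_mul_deriv_eq_deriv_mul (a := -1) (b := 1) (fun x _ => S.hasDerivAt x)
    (fun x _ => hP.hasDerivAt_one_sub_mul_eval x)
    (S.derivative.continuous.intervalIntegrable _ _)
    (((continuous_legendreP n).const_mul _).intervalIntegrable _ _)
  simp_rw [mul_left_comm _ (-((n : ℝ) + 1)), intervalIntegral.integral_const_mul,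
    integral_eval_mul_legendreP_eq_zero (hS.trans_lt hR), hP.eval_neg_one (by omega)] at hibp
  linarith

theorem integral_mul_weight_eq_zero_of_lt {m : ℕ} {Q : ℝ[X]} (hP : IsPolarLegendre n P)
    (hQ : IsPolarLegendre m Q) (hn : n ≠ 0) (hdeg : P.natDegree ≤ n) (hnm : n < m) :
    ∫ x in (-1 : ℝ)..1, P.eval x * Q.eval x * ((1 - x) / (1 + x)) = 0 := by
  set R := P /ₘ (X - C (-1))
  have hPR : P = (X - C (-1)) * R := (mul_divByMonic_eq_iff_isRoot.mpr (hP.eval_neg_one hn)).symm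
  have hR : R.natDegree + 1 < m := by
    rw [natDegree_divByMonic _ (monic_X_sub_C _), natDegree_X_sub_C]
    omega
  rw [← hQ.integral_eval_mul_one_sub_mul_eval_eq_zero hR]
  refine intervalIntegral.integral_congr_ae (ae_of_all _ fun x hx => ?_)
  rw [Set.uIoc_of_le (by norm_num)] at hx
  have hx : 1 + x ≠ 0 := by linarith [hx.1]
  rw [hPR, eval_mul, eval_sub, eval_X, eval_C]
  field_simp
  ring

end IsPolarLegendre

theorem stmt12 (n m : ℕ) (hn : 2 ≤ n) (hm : 2 ≤ m) (hnm : n ≠ m)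
    (Pn Pm : Polynomial ℝ) (hdegn : Pn.degree = n) (hdegm : Pm.degree = m)
    (hdefn : ∀ x : ℝ, -((n : ℝ) + 1) * ∫ t in x..(1 : ℝ), legendreP n t = (x - 1) * Pn.eval x)
    (hdefm : ∀ x : ℝ, -((m : ℝ) + 1) * ∫ t in x..(1 : ℝ), legendreP m t = (x - 1) * Pm.eval x) :
    ∫ x in (-1 : ℝ)..1, Pn.eval x * Pm.eval x * ((1 - x) / (1 + x)) = 0 := by
  wlog hlt : n < m generalizing n m Pn Pm
  · rw [← this m n hm hn hnm.symm Pm Pn hdegm hdegn hdefm hdefn (by omega)]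
    congr 1 with x
    ring
  exact IsPolarLegendre.integral_mul_weight_eq_zero_of_lt hdefn hdefm (by omega)
    (natDegree_eq_of_degree_eq_some hdegn).le hlt
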